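/- Characterization of extremal parity expectation: for every n ≥ 3 and every surjective word w : Fin n → Fin 3, one has |P(w)| = 1 if and only if there exist k and a permutation τ of Fin 3 such that τ ∘ w ∘ r_k : Fin n → Fin 3 is monotone (i.e., w is a three-solid-blocks necklace up to cyclic shift and reordering of letters), where r_k : Fin n → Fin n is the cyclic shift i ↦ i + k (addition mod n). -/

import Mathlib

/-- The set of proper subwords of a word `w : Fin n → Fin 3`: sections
`s : Fin 3 → Fin n` with `w (s i) = i` for all `i`. -/
def properSubwords {n : ℕ} (w : Fin n → Fin 3) : Finset (Fin 3 → Fin n) :=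
  Finset.univ.filter (fun s => ∀ i, w (s i) = i)

/-- The parity of a proper subword `s`: the sign of the unique permutation
`σ` of `Fin 3` such that `j ↦ s (σ j)` is (strictly) monotone; for injective
`s` this is the sorting permutation `Tuple.sort s`. -/
def subwordParity {n : ℕ} (s : Fin 3 → Fin n) : ℤ :=
  Equiv.Perm.sign (Tuple.sort s)

/-- The parity expectation `P(w)`: the sum of the parities of all proper
subwords of `w`, divided by the number of proper subwords of `w`. -/
def parityExpectation {n : ℕ} (w : Fin n → Fin 3) : ℚ :=
  (∑ s ∈ properSubwords w, (subwordParity s : ℚ)) / ((properSubwords w).card : ℚ)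

/-! A proper subword is a triple of positions `a, b, c` carrying the letters `0, 1, 2`, and its
parity is `1` exactly when `sbtw a b c`, i.e. when `a, b, c` occur in this cyclic order (the
circular order on `Fin n` induced by its linear order). So `|P(w)| = 1` says that all these triples
have the same cyclic orientation. The orientation is invariant under rotation, and in a monotone
word it is that of the letters. Conversely, if every triple is positively oriented, rotate `w` so
that it starts at the beginning of a block of `0`s: then the last letter is `2`, all `1`s precede
all `2`s and all `0`s precede all `1`s, so the rotated word is monotone. Negative orientation
reduces to this by exchanging the letters `1` and `2`. -/

open Function Finset

theorem abs_sum_div_card_eq_one_iff {ι K : Type*}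
    [Field K] [LinearOrder K] [IsStrictOrderedRing K] {S : Finset ι} (hS : S.Nonempty)
    {f : ι → K} (hf : ∀ i ∈ S, |f i| ≤ 1) :
    |(∑ i ∈ S, f i) / #S| = 1 ↔ (∀ i ∈ S, f i = 1) ∨ ∀ i ∈ S, f i = -1 := by
  have hcard : (0 : K) < #S := by exact_mod_cast hS.card_pos
  have hcard_eq : (#S : K) = ∑ _ ∈ S, 1 := by simp
  rw [abs_div, abs_of_pos hcard, div_eq_one_iff_eq hcard.ne', abs_eq hcard.le, hcard_eq,
    ← neg_eq_iff_eq_neg, ← sum_neg_distrib,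
    sum_eq_sum_iff_of_le fun i hi => (abs_le.1 (hf i hi)).2,
    sum_eq_sum_iff_of_le fun i hi => neg_le.1 (abs_le.1 (hf i hi)).1]
  simp only [neg_eq_iff_eq_neg]

theorem not_sbtw_iff_sbtw_swap {α : Type*} [CircularOrder α] {a b c : α}
    (hab : a ≠ b) (hbc : b ≠ c) (hca : c ≠ a) : ¬sbtw a b c ↔ sbtw a c b := by
  refine ⟨fun h => ?_, fun h h' => sbtw_asymm h' h.cyclic_left⟩
  have hcba : btw c b a := btw_iff_not_sbtw.2 h
  refine sbtw_cyclic_right (sbtw_of_btw_not_btw hcba fun habc => ?_)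
  rcases habc.antisymm hcba with h | h | h <;> contradiction

theorem Fin.sbtw_add_right_iff {n : ℕ} {a b c k : Fin n} :
    sbtw (a + k) (b + k) (c + k) ↔ sbtw a b c := by
  simp only [Fin.sbtw_iff, Fin.lt_def, Fin.val_add_eq_ite]
  split_ifs <;> omega

theorem Monotone.sbtw_iff_of_ne {m n : ℕ} {f : Fin m → Fin n} (hf : Monotone f) {a b c : Fin m}
    (hab : f a ≠ f b) (hbc : f b ≠ f c) (hca : f c ≠ f a) :
    sbtw (f a) (f b) (f c) ↔ sbtw a b c := by
  have lt_iff {x y : Fin m} (h : f x ≠ f y) : f x < f y ↔ x < y :=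
    ⟨hf.reflect_lt, fun hxy => (hf hxy.le).lt_of_ne h⟩
  simp only [Fin.sbtw_iff, lt_iff hab, lt_iff hbc, lt_iff hca]

theorem Equiv.Perm.sign_eq_one_iff_sbtw (τ : Equiv.Perm (Fin 3)) :
    Equiv.Perm.sign τ = 1 ↔ sbtw (τ 0) (τ 1) (τ 2) := by
  simp only [Fin.sbtw_iff]
  revert τ
  decide

theorem Tuple.sign_sort_eq_one_iff_sbtw {n : ℕ} {s : Fin 3 → Fin n} (hs : Injective s) :
    Equiv.Perm.sign (Tuple.sort s) = 1 ↔ sbtw (s 0) (s 1) (s 2) := by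
  set σ := Tuple.sort s
  have hsorted : StrictMono (s ∘ σ) :=
    (Tuple.monotone_sort s).strictMono_of_injective (hs.comp σ.injective)
  have lt_iff (i j : Fin 3) : s i < s j ↔ σ.symm i < σ.symm j := by
    simpa using hsorted.lt_iff_lt (a := σ.symm i) (b := σ.symm j)
  rw [← Equiv.Perm.sign_symm, Equiv.Perm.sign_eq_one_iff_sbtw]
  simp only [Fin.sbtw_iff, lt_iff]

section ProperSubwords

variable {n : ℕ} {w : Fin n → Fin 3}

theorem mem_properSubwords {s : Fin 3 → Fin n} :
    s ∈ properSubwords w ↔ ∀ i, w (s i) = i := by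
  simp [properSubwords]

theorem injective_of_mem_properSubwords {s : Fin 3 → Fin n} (hs : s ∈ properSubwords w) :
    Injective s :=
  LeftInverse.injective (g := w) (mem_properSubwords.1 hs)

theorem properSubwords_nonempty (hw : Surjective w) : (properSubwords w).Nonempty :=
  ⟨surjInv hw, mem_properSubwords.2 (rightInverse_surjInv hw)⟩

theorem forall_mem_properSubwords_iff {p : Fin n → Fin n → Fin n → Prop} :
    (∀ s ∈ properSubwords w, p (s 0) (s 1) (s 2)) ↔
      ∀ a b c, w a = 0 → w b = 1 → w c = 2 → p a b c := by
  refine ⟨fun h a b c ha hb hc => h ![a, b, c] ?_, fun h s hs => ?_⟩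
  · exact mem_properSubwords.2 fun i => by fin_cases i <;> assumption
  · have hs := mem_properSubwords.1 hs
    exact h _ _ _ (hs 0) (hs 1) (hs 2)

end ProperSubwords

section SubwordParity

variable {n : ℕ} {s : Fin 3 → Fin n}

theorem subwordParity_eq_one_iff (hs : Injective s) :
    subwordParity s = 1 ↔ sbtw (s 0) (s 1) (s 2) := by
  rw [subwordParity, Units.val_eq_one, Tuple.sign_sort_eq_one_iff_sbtw hs]

theorem subwordParity_eq_neg_one_iff (hs : Injective s) :
    subwordParity s = -1 ↔ sbtw (s 0) (s 2) (s 1) := by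
  rw [← not_sbtw_iff_sbtw_swap (hs.ne (by decide)) (hs.ne (by decide)) (hs.ne (by decide)),
    ← subwordParity_eq_one_iff hs]
  rcases Int.units_eq_one_or (Equiv.Perm.sign (Tuple.sort s)) with h | h <;>
    simp [subwordParity, h]

end SubwordParity

theorem abs_parityExpectation_eq_one_iff_sbtw {n : ℕ} {w : Fin n → Fin 3} (hw : Surjective w) :
    |parityExpectation w| = 1 ↔
      (∀ a b c, w a = 0 → w b = 1 → w c = 2 → sbtw a b c) ∨
        ∀ a b c, w a = 0 → w b = 1 → w c = 2 → sbtw a c b := by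
  rw [parityExpectation, abs_sum_div_card_eq_one_iff (properSubwords_nonempty hw)
    (f := fun s => (subwordParity s : ℚ)) fun s _ => (abs_unit_intCast _).le]
  simp only [← forall_mem_properSubwords_iff]
  refine or_congr (forall₂_congr fun s hs => ?_) (forall₂_congr fun s hs => ?_)
  · rw [Int.cast_eq_one, subwordParity_eq_one_iff (injective_of_mem_properSubwords hs)]
  · rw [← subwordParity_eq_neg_one_iff (injective_of_mem_properSubwords hs)]
    exact_mod_cast Iff.rfl

open Fin.NatCast in
theorem Fin.exists_not_and_add_one {n : ℕ} [NeZero n] {p : Fin n → Prop}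
    (hp : ∃ a, p a) (hnp : ∃ b, ¬p b) : ∃ i, ¬p i ∧ p (i + 1) := by
  obtain ⟨a, ha⟩ := hp
  obtain ⟨b, hb⟩ := hnp
  by_contra! h
  have hbm (m : ℕ) : ¬p (b + (m : Fin n)) := by
    induction m with
    | zero => simpa using hb
    | succ m ih => simpa [Nat.cast_succ, add_assoc] using h _ ih
  exact absurd ha (by simpa using hbm (a - b).val)

theorem Fin.monotone_of_sbtw {m : ℕ} {u : Fin (m + 1) → Fin 3} (hu : Surjective u)
    (h0 : u 0 = 0) (hlast : u (Fin.last m) ≠ 0)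
    (H : ∀ a b c, u a = 0 → u b = 1 → u c = 2 → sbtw a b c) : Monotone u := by
  obtain ⟨b₁, hb₁⟩ := hu 1
  obtain ⟨c₁, hc₁⟩ := hu 2
  have h12 (b c) (hb : u b = 1) (hc : u c = 2) : b < c := by
    have h := H 0 b c h0 hb hc
    simp only [Fin.sbtw_iff, Fin.not_lt_zero, and_false, false_and, or_false] at h
    exact h.2
  have hlast2 : u (Fin.last m) = 2 := by
    by_contra h
    have hlast1 : u (Fin.last m) = 1 := by omega
    exact (h12 _ _ hlast1 hc₁).not_ge (Fin.le_last c₁)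
  have h01 (a b) (ha : u a = 0) (hb : u b = 1) : a < b := by
    have h := H a b _ ha hb hlast2
    simp only [Fin.sbtw_iff, (Fin.le_last _).not_gt, and_false, false_and, or_false] at h
    exact h.1
  have h02 (a c) (ha : u a = 0) (hc : u c = 2) : a < c :=
    (h01 a b₁ ha hb₁).trans (h12 b₁ c hb₁ hc)
  have reflect_lt (i j) (hij : u i < u j) : i < j := by
    have : u i = 0 ∧ u j = 1 ∨ u i = 0 ∧ u j = 2 ∨ u i = 1 ∧ u j = 2 := by omega
    rcases this with ⟨hi, hj⟩ | ⟨hi, hj⟩ | ⟨hi, hj⟩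
    exacts [h01 i j hi hj, h02 i j hi hj, h12 i j hi hj]
  exact fun i j hij => not_lt.1 fun h => (reflect_lt j i h).not_ge hij

theorem exists_monotone_comp_add_of_sbtw {n : ℕ} [NeZero n] {w : Fin n → Fin 3}
    (hw : Surjective w) (H : ∀ a b c, w a = 0 → w b = 1 → w c = 2 → sbtw a b c) :
    ∃ k, Monotone fun i => w (i + k) := by
  obtain ⟨m, rfl⟩ := Nat.exists_eq_succ_of_ne_zero (NeZero.ne n)
  obtain ⟨b, hb⟩ := hw 1
  obtain ⟨i, hi, hi1⟩ := Fin.exists_not_and_add_one (p := fun j => w j = 0) (hw 0)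
    ⟨b, by simp [hb]⟩
  refine ⟨i + 1, Fin.monotone_of_sbtw (hw.comp (add_right_surjective _)) (by simpa) ?_
    fun a b c ha hb hc => Fin.sbtw_add_right_iff.1 (H _ _ _ ha hb hc)⟩
  rwa [add_comm i, ← add_assoc, Fin.last_add_one, zero_add]

theorem sbtw_iff_of_monotone_comp_add {n : ℕ} [NeZero n] {w : Fin n → Fin 3} {k : Fin n}
    {τ : Equiv.Perm (Fin 3)} (hmono : Monotone fun i => τ (w (i + k))) {a b c : Fin n}
    (ha : w a = 0) (hb : w b = 1) (hc : w c = 2) :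
    sbtw a b c ↔ sbtw (τ 0) (τ 1) (τ 2) := by
  have key := hmono.sbtw_iff_of_ne (a := a - k) (b := b - k) (c := c - k)
  simp only [sub_add_cancel, ha, hb, hc, τ.injective.ne_iff] at key
  rw [key (by decide) (by decide) (by decide)]
  simpa using Fin.sbtw_add_right_iff (a := a - k) (b := b - k) (c := c - k) (k := k)

theorem abs_parityExpectation_eq_one_iff_general (n : ℕ)
    (w : Fin n → Fin 3) (hw : Function.Surjective w) :
    |parityExpectation w| = 1 ↔
      ∃ (k : Fin n) (τ : Equiv.Perm (Fin 3)),
        Monotone (fun i => τ (w (i + k))) := by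
  have : NeZero n := Fin.neZero (hw 0).choose
  rw [abs_parityExpectation_eq_one_iff_sbtw hw]
  constructor
  · rintro (hpos | hneg)
    · obtain ⟨k, hk⟩ := exists_monotone_comp_add_of_sbtw hw hpos
      exact ⟨k, 1, hk⟩
    · have hneg' : ∀ a b c, Equiv.swap 1 2 (w a) = 0 → Equiv.swap 1 2 (w b) = 1 →
          Equiv.swap 1 2 (w c) = 2 → sbtw a b c := fun a b c ha hb hc =>
        hneg a c b (by simpa [Equiv.swap_apply_eq_iff, Equiv.swap_apply_of_ne_of_ne] using ha)
          (by simpa [Equiv.swap_apply_eq_iff] using hc)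
          (by simpa [Equiv.swap_apply_eq_iff] using hb)
      obtain ⟨k, hk⟩ :=
        exists_monotone_comp_add_of_sbtw ((Equiv.swap 1 2).surjective.comp hw) hneg'
      exact ⟨k, Equiv.swap 1 2, hk⟩
  · rintro ⟨k, τ, hmono⟩
    by_cases hτ : sbtw (τ 0) (τ 1) (τ 2)
    · exact .inl fun a b c ha hb hc => (sbtw_iff_of_monotone_comp_add hmono ha hb hc).2 hτ
    · refine .inr fun a b c ha hb hc => (not_sbtw_iff_sbtw_swap ?_ ?_ ?_).1
        (mt (sbtw_iff_of_monotone_comp_add hmono ha hb hc).1 hτ)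
      all_goals exact ne_of_apply_ne w (by simp [ha, hb, hc])

/-- Characterization of extremal parity expectation: `|P(w)| = 1` iff `w` is a
three-solid-blocks necklace up to cyclic shift and reordering of letters. -/
theorem abs_parityExpectation_eq_one_iff (n : ℕ) (hn : 3 ≤ n)
    (w : Fin n → Fin 3) (hw : Function.Surjective w) :
    |parityExpectation w| = 1 ↔
      ∃ (k : Fin n) (τ : Equiv.Perm (Fin 3)),
        Monotone (fun i => τ (w (i + k))) :=
  abs_parityExpectation_eq_one_iff_general n w hw
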